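/- arXiv:2303.17751 — 8 statements merged into one kernel-verified Lean document; each statement's English description precedes it below -/
import Mathlib

section
/- Let T be a Boolean algebra and let (a,g) and (a',g') be pairs of elements of T (assume-guarantee contracts). Define the composition assumptions a_c = (a ⊓ a') ⊔ (a ⊓ gᶜ) ⊔ (a' ⊓ g'ᶜ) and guarantees g_c = (g ⊔ aᶜ) ⊓ (g' ⊔ a'ᶜ). Suppose a'' ∈ T satisfies a'' ⊓ g ⊓ a ≤ a' ⊓ g ⊓ a, and g'' ∈ T satisfies g ⊓ g' ≤ g''. Then the contract (a ⊓ a'', g'') is a relaxation of (a_c, g_c), i.e., a ⊓ a'' ≤ a_c and g_c ⊔ a_cᶜ ≤ g'' ⊔ (a ⊓ a'')ᶜ. -/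
lemma aux_meet {T : Type*} [BooleanAlgebra T] (x y : T) : (y ⊔ xᶜ) ⊓ x ≤ y := by
  rw [inf_sup_right]
  simp

theorem composition_relaxation {T : Type*} [BooleanAlgebra T]
    (a g a' g' a'' g'' : T)
    (h1 : a'' ⊓ g ⊓ a ≤ a' ⊓ g ⊓ a)
    (h2 : g ⊓ g' ≤ g'') :
    a ⊓ a'' ≤ (a ⊓ a') ⊔ (a ⊓ gᶜ) ⊔ (a' ⊓ g'ᶜ) ∧
    ((g ⊔ aᶜ) ⊓ (g' ⊔ a'ᶜ)) ⊔ ((a ⊓ a') ⊔ (a ⊓ gᶜ) ⊔ (a' ⊓ g'ᶜ))ᶜ ≤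
      g'' ⊔ (a ⊓ a'')ᶜ := by
  have hg : a ⊓ a'' ⊓ g ≤ a' := by
    calc a ⊓ a'' ⊓ g = a'' ⊓ g ⊓ a := by ac_rfl
      _ ≤ a' ⊓ g ⊓ a := h1
      _ ≤ a' := by simp [inf_assoc]
  have h1' : a ⊓ a'' ≤ (a ⊓ a') ⊔ (a ⊓ gᶜ) ⊔ (a' ⊓ g'ᶜ) := by
    have : a ⊓ a'' = (a ⊓ a'' ⊓ g) ⊔ (a ⊓ a'' ⊓ gᶜ) := by
      rw [← inf_sup_left, sup_compl_eq_top, inf_top_eq]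
    rw [this]
    apply sup_le
    · exact le_sup_of_le_left (le_sup_of_le_left (le_inf (inf_le_left.trans inf_le_left) hg))
    · exact le_sup_of_le_left (le_sup_of_le_right (inf_le_inf_right _ inf_le_left))
  refine ⟨h1', sup_le ?_ ((compl_le_compl h1').trans le_sup_right)⟩
  rw [show g'' ⊔ (a ⊓ a'')ᶜ = (a ⊓ a'') ⇨ g'' from himp_eq.symm, le_himp_iff]
  set x := ((g ⊔ aᶜ) ⊓ (g' ⊔ a'ᶜ)) ⊓ (a ⊓ a'') with hx
  have hxg : x ≤ g := by
    calc x ≤ (g ⊔ aᶜ) ⊓ a := inf_le_inf (inf_le_left) inf_le_left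
      _ ≤ g := aux_meet a g
  have hxa' : x ≤ a' := by
    have : x ≤ a'' ⊓ g ⊓ a :=
      le_inf (le_inf (inf_le_right.trans inf_le_right) hxg) (inf_le_right.trans inf_le_left)
    exact (this.trans h1).trans (inf_le_left.trans inf_le_left)
  have hxg' : x ≤ g' := by
    calc x ≤ (g' ⊔ a'ᶜ) ⊓ a' := le_inf (inf_le_left.trans inf_le_right) hxa'
      _ ≤ g' := aux_meet a' g'
  exact (le_inf hxg hxg').trans h2
end

section
/- Let T be a Boolean algebra and let (a,g), (a',g') be contracts over T. Define the quotient contract (a_q, g_q) where a_q = a ⊓ (a'ᶜ ⊔ g') and g_q = (a' ⊓ g) ⊔ aᶜ ⊔ (a' ⊓ g'ᶜ). Suppose a'' ∈ T satisfies a_q ≤ a'', and g'', g''' ∈ T satisfy a' ⊓ g' ⊓ g'' ≤ a' ⊓ g' ⊓ g and g''' ⊓ a ≤ a' ⊓ g'' ⊓ a. Then (a'', g''') is a refinement of (a_q, g_q), i.e., a_q ≤ a'' and g''' ⊔ a''ᶜ ≤ g_q ⊔ a_qᶜ. -/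
theorem quotient_refinement {T : Type*} [BooleanAlgebra T]
    (a g a' g' a'' g'' g''' : T)
    (h1 : a ⊓ (a'ᶜ ⊔ g') ≤ a'')
    (h2 : a' ⊓ g' ⊓ g'' ≤ a' ⊓ g' ⊓ g)
    (h3 : g''' ⊓ a ≤ a' ⊓ g'' ⊓ a) :
    a ⊓ (a'ᶜ ⊔ g') ≤ a'' ∧
    g''' ⊔ a''ᶜ ≤ ((a' ⊓ g) ⊔ aᶜ ⊔ (a' ⊓ g'ᶜ)) ⊔ (a ⊓ (a'ᶜ ⊔ g'))ᶜ := by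
  refine ⟨h1, sup_le ?_ (le_sup_of_le_right (compl_le_compl h1))⟩
  have key : g''' ⊓ a ≤ (a' ⊓ g) ⊔ (a' ⊓ g'ᶜ) :=
    calc g''' ⊓ a ≤ a' ⊓ g'' := h3.trans inf_le_left
    _ = (a' ⊓ g'' ⊓ g') ⊔ (a' ⊓ g'' ⊓ g'ᶜ) := by
        rw [← inf_sup_left, sup_compl_eq_top, inf_top_eq]
    _ ≤ (a' ⊓ g) ⊔ (a' ⊓ g'ᶜ) := by
        apply sup_le_sup
        · have : a' ⊓ g'' ⊓ g' = a' ⊓ g' ⊓ g'' := by ac_rfl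
          rw [this]
          exact h2.trans (inf_le_inf_right g inf_le_left)
        · exact inf_le_inf_right g'ᶜ inf_le_left
  have hsplit : g''' ≤ (g''' ⊓ a) ⊔ aᶜ := by
    calc g''' = g''' ⊓ (a ⊔ aᶜ) := by rw [sup_compl_eq_top, inf_top_eq]
    _ = (g''' ⊓ a) ⊔ (g''' ⊓ aᶜ) := inf_sup_left _ _ _
    _ ≤ _ := sup_le_sup_left inf_le_right _
  calc g''' ≤ (g''' ⊓ a) ⊔ aᶜ := hsplit
  _ ≤ ((a' ⊓ g) ⊔ (a' ⊓ g'ᶜ)) ⊔ aᶜ := sup_le_sup_right key _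
  _ ≤ _ := by
      apply sup_le
      · exact le_sup_of_le_left (sup_le (le_sup_left.trans le_sup_left) le_sup_right)
      · exact le_sup_of_le_left (le_sup_of_le_left le_sup_right)
end

section
/- Let T be a Boolean algebra and let (a,g), (a',g') be contracts over T with a' ≤ a. Then g ⊔ aᶜ ≤ g' ⊔ a'ᶜ if and only if g ⊓ a' ≤ g' ⊓ a'. Consequently, (a,g) refines (a',g') if and only if a' ≤ a and g ⊓ a' ≤ g' ⊓ a'. -/
theorem refinement_without_complements {T : Type*} [BooleanAlgebra T]
    (a g a' g' : T) :
    (a' ≤ a → (g ⊔ aᶜ ≤ g' ⊔ a'ᶜ ↔ g ⊓ a' ≤ g' ⊓ a')) ∧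
    ((a' ≤ a ∧ g ⊔ aᶜ ≤ g' ⊔ a'ᶜ) ↔ (a' ≤ a ∧ g ⊓ a' ≤ g' ⊓ a')) := by
  have key : a' ≤ a → (g ⊔ aᶜ ≤ g' ⊔ a'ᶜ ↔ g ⊓ a' ≤ g' ⊓ a') := by
    intro haa
    constructor
    · intro h
      calc g ⊓ a' ≤ (g ⊔ aᶜ) ⊓ a' := inf_le_inf_right _ le_sup_left
        _ ≤ (g' ⊔ a'ᶜ) ⊓ a' := inf_le_inf_right _ h
        _ = g' ⊓ a' := by rw [inf_sup_right, compl_inf_eq_bot, sup_bot_eq]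
    · intro h
      apply sup_le
      · calc g ≤ (g ⊓ a') ⊔ a'ᶜ := by
              rw [sup_inf_right]; exact le_inf le_sup_left (by simp)
          _ ≤ g' ⊓ a' ⊔ a'ᶜ := sup_le_sup_right h _
          _ ≤ g' ⊔ a'ᶜ := sup_le_sup_right inf_le_left _
      · exact le_sup_of_le_right (compl_le_compl haa)
  exact ⟨key, ⟨fun ⟨h1, h2⟩ => ⟨h1, (key h1).mp h2⟩, fun ⟨h1, h2⟩ => ⟨h1, (key h1).mpr h2⟩⟩⟩
end

section
/- Let T be a Boolean algebra. For contracts C = (a,g) and C' = (a',g'), define the conjunction C ⊓ C' = (a ⊔ a', (g ⊔ aᶜ) ⊓ (g' ⊔ a'ᶜ)). Then the conjunction is the greatest lower bound of C and C' with respect to contract refinement: C ⊓ C' ≤ C, C ⊓ C' ≤ C', and for any contract D with D ≤ C and D ≤ C', we have D ≤ C ⊓ C'. -/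
def ContractRefines {T : Type*} [BooleanAlgebra T] (C C' : T × T) : Prop :=
  C'.1 ≤ C.1 ∧ C.2 ⊔ C.1ᶜ ≤ C'.2 ⊔ C'.1ᶜ

def ContractConj {T : Type*} [BooleanAlgebra T] (C C' : T × T) : T × T :=
  (C.1 ⊔ C'.1, (C.2 ⊔ C.1ᶜ) ⊓ (C'.2 ⊔ C'.1ᶜ))

theorem conjunction_is_glb {T : Type*} [BooleanAlgebra T] (C C' : T × T) :
    ContractRefines (ContractConj C C') C ∧
    ContractRefines (ContractConj C C') C' ∧
    ∀ D : T × T, ContractRefines D C → ContractRefines D C' →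
      ContractRefines D (ContractConj C C') := by
  refine ⟨⟨le_sup_left, ?_⟩, ⟨le_sup_right, ?_⟩, ?_⟩
  · exact sup_le (inf_le_left)
      ((compl_le_compl le_sup_left).trans le_sup_right)
  · exact sup_le (inf_le_right)
      ((compl_le_compl le_sup_right).trans le_sup_right)
  · rintro D ⟨h1, h2⟩ ⟨h3, h4⟩
    exact ⟨sup_le h1 h3, (le_inf h2 h4).trans le_sup_left⟩
end

section
/- Let T be a Boolean algebra and let C = (a,g), C' = (a',g'), C'' = (a'',g'') be contracts over T. If C'' refines the quotient C / C' = (a ⊓ (a'ᶜ ⊔ g'), (a' ⊓ g) ⊔ aᶜ ⊔ (a' ⊓ g'ᶜ)), then the composition C' ∥ C'' refines C. -/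
def ContractComp {T : Type*} [BooleanAlgebra T] (C C' : T × T) : T × T :=
  ((C.1 ⊓ C'.1) ⊔ (C.1 ⊓ C.2ᶜ) ⊔ (C'.1 ⊓ C'.2ᶜ),
   (C.2 ⊔ C.1ᶜ) ⊓ (C'.2 ⊔ C'.1ᶜ))

def ContractQuot {T : Type*} [BooleanAlgebra T] (C C' : T × T) : T × T :=
  (C.1 ⊓ (C'.1ᶜ ⊔ C'.2), (C'.1 ⊓ C.2) ⊔ C.1ᶜ ⊔ (C'.1 ⊓ C'.2ᶜ))

section
variable {T : Type*} [BooleanAlgebra T] (a g a' g' a'' g'' : T)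

lemma quot_key
    (h1 : a ⊓ (a'ᶜ ⊔ g') ≤ a'')
    (h2 : g'' ⊔ a''ᶜ ≤ ((a' ⊓ g) ⊔ aᶜ ⊔ (a' ⊓ g'ᶜ)) ⊔ (a ⊓ (a'ᶜ ⊔ g'))ᶜ) :
    a ≤ (a' ⊓ a'') ⊔ (a' ⊓ g'ᶜ) ⊔ (a'' ⊓ g''ᶜ) ∧
    ((g' ⊔ a'ᶜ) ⊓ (g'' ⊔ a''ᶜ)) ⊔ ((a' ⊓ a'') ⊔ (a' ⊓ g'ᶜ) ⊔ (a'' ⊓ g''ᶜ))ᶜ ≤ g ⊔ aᶜ := by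
  have botof : ∀ x y : T, y ≤ x → y ≤ xᶜ → y = ⊥ := fun x y hx hxc =>
    le_bot_iff.mp (by simpa using le_inf hx hxc)
  have hc : (a ⊓ (a'ᶜ ⊔ g'))ᶜ = aᶜ ⊔ (a' ⊓ g'ᶜ) := by
    simp [compl_inf, compl_sup]
  have h2' : g'' ≤ (a' ⊓ g) ⊔ aᶜ ⊔ (a' ⊓ g'ᶜ) := by
    refine le_trans (le_trans le_sup_left h2) ?_
    rw [hc]
    exact sup_le le_rfl (sup_le (le_sup_right.trans le_sup_left) le_sup_right)
  -- a ⊓ a'ᶜ ≤ g''ᶜ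
  have hg'' : a ⊓ a'ᶜ ≤ g''ᶜ := by
    rw [le_compl_iff_disjoint_right, disjoint_iff]
    refine le_antisymm ?_ bot_le
    calc (a ⊓ a'ᶜ) ⊓ g'' ≤ (a ⊓ a'ᶜ) ⊓ ((a' ⊓ g) ⊔ aᶜ ⊔ (a' ⊓ g'ᶜ)) :=
          inf_le_inf_left _ h2'
      _ = ⊥ := by
          rw [inf_sup_left, inf_sup_left]
          simp only [inf_assoc]
          refine le_antisymm (sup_le (sup_le ?_ ?_) ?_) bot_le
          · exact (botof a' _ (inf_le_of_right_le (inf_le_of_right_le inf_le_left))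
              (inf_le_of_right_le inf_le_left)).le
          · exact (botof a _ inf_le_left (inf_le_of_right_le inf_le_right)).le
          · exact (botof a' _ (inf_le_of_right_le (inf_le_of_right_le inf_le_left))
              (inf_le_of_right_le inf_le_left)).le
  have p1 : a ⊓ a' ⊓ g' ≤ a' ⊓ a'' := by
    refine le_inf (inf_le_left.trans inf_le_right) ?_
    refine le_trans ?_ h1
    exact le_inf (inf_le_left.trans inf_le_left) (inf_le_right.trans le_sup_right)
  have p3 : a ⊓ a'ᶜ ≤ a'' ⊓ g''ᶜ := by
    refine le_inf (le_trans ?_ h1) hg''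
    exact inf_le_inf_left _ (le_sup_left)
  have goal1 : a ≤ (a' ⊓ a'') ⊔ (a' ⊓ g'ᶜ) ⊔ (a'' ⊓ g''ᶜ) := by
    have decomp : a = ((a ⊓ a' ⊓ g') ⊔ (a ⊓ a' ⊓ g'ᶜ)) ⊔ (a ⊓ a'ᶜ) := by
      rw [← inf_sup_left, sup_compl_eq_top, inf_top_eq, ← inf_sup_left, sup_compl_eq_top,
        inf_top_eq]
    calc a = ((a ⊓ a' ⊓ g') ⊔ (a ⊓ a' ⊓ g'ᶜ)) ⊔ (a ⊓ a'ᶜ) := decomp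
      _ ≤ ((a' ⊓ a'') ⊔ (a' ⊓ g'ᶜ)) ⊔ (a'' ⊓ g''ᶜ) := by
          refine sup_le_sup (sup_le_sup p1 ?_) p3
          exact inf_le_inf_right _ (inf_le_right)
  refine ⟨goal1, sup_le ?_ ?_⟩
  · -- (g'⊔a'ᶜ) ⊓ (g''⊔a''ᶜ) ≤ g ⊔ aᶜ
    rw [sup_comm g aᶜ, ← sdiff_le_iff, sdiff_eq, compl_compl]
    -- S ⊓ a ≤ g
    have ha'' : (g' ⊔ a'ᶜ) ⊓ a ≤ a'' := by
      rw [inf_comm, sup_comm]; exact h1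
    have step : ((g' ⊔ a'ᶜ) ⊓ (g'' ⊔ a''ᶜ)) ⊓ a =
        ((g' ⊔ a'ᶜ) ⊓ a ⊓ g'') ⊔ ((g' ⊔ a'ᶜ) ⊓ a ⊓ a''ᶜ) := by
      rw [inf_right_comm, inf_sup_left]
    rw [step]
    refine sup_le ?_ ?_
    · calc (g' ⊔ a'ᶜ) ⊓ a ⊓ g'' ≤ (g' ⊔ a'ᶜ) ⊓ a ⊓ ((a' ⊓ g) ⊔ aᶜ ⊔ (a' ⊓ g'ᶜ)) :=
            inf_le_inf_left _ h2'
        _ ≤ g := by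
            rw [inf_sup_left, inf_sup_left]
            refine sup_le (sup_le ?_ ?_) ?_
            · exact inf_le_right.trans inf_le_right
            · have : (g' ⊔ a'ᶜ) ⊓ a ⊓ aᶜ = ⊥ := by
                rw [inf_assoc]; simp
              rw [this]; exact bot_le
            · have : (g' ⊔ a'ᶜ) ⊓ a ⊓ (a' ⊓ g'ᶜ) = ⊥ := by
                rw [inf_right_comm, inf_sup_right, inf_sup_right]
                simp only [inf_assoc]
                refine le_antisymm (sup_le ?_ ?_) bot_le
                · exact (botof g' _ inf_le_left
                    (inf_le_of_right_le (inf_le_of_right_le inf_le_left))).le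
                · exact (botof a' _ (inf_le_of_right_le inf_le_left)
                    inf_le_left).le
              rw [this]; exact bot_le
    · have : (g' ⊔ a'ᶜ) ⊓ a ⊓ a''ᶜ ≤ a'' ⊓ a''ᶜ := inf_le_inf_right _ ha''
      simpa using this.trans (by simp)
  · exact (compl_le_compl goal1).trans le_sup_right

end

theorem quotient_sound {T : Type*} [BooleanAlgebra T] (C C' C'' : T × T)
    (h : ContractRefines C'' (ContractQuot C C')) :
    ContractRefines (ContractComp C' C'') C := by
  obtain ⟨h1, h2⟩ := h
  exact quot_key C.1 C.2 C'.1 C'.2 C''.1 C''.2 h1 h2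
end

section
/- Let T be a Boolean algebra and let C = (a,g), C' = (a',g') be contracts. The quotient C / C' = (a ⊓ (a'ᶜ ⊔ g'), (a' ⊓ g) ⊔ aᶜ ⊔ (a' ⊓ g'ᶜ)) is the largest contract C'' (with respect to refinement) such that C' ∥ C'' ≤ C; that is, for any contract C'' with C' ∥ C'' ≤ C, we have C'' ≤ C / C'. -/
lemma quot_aux1 {T : Type*} [BooleanAlgebra T] {a a' g' a'' g'' : T}
    (h1 : a ≤ (a' ⊓ a'') ⊔ (a' ⊓ g'ᶜ) ⊔ (a'' ⊓ g''ᶜ)) :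
    a ⊓ (a'ᶜ ⊔ g') ≤ a'' := by
  calc a ⊓ (a'ᶜ ⊔ g') ≤ ((a' ⊓ a'') ⊔ (a' ⊓ g'ᶜ) ⊔ (a'' ⊓ g''ᶜ)) ⊓ (a'ᶜ ⊔ g') :=
        inf_le_inf_right _ h1
    _ ≤ a'' := by
        rw [inf_sup_right, inf_sup_right]
        refine sup_le (sup_le ?_ ?_) ?_
        · exact le_trans inf_le_left inf_le_right
        · have : (a' ⊓ g'ᶜ) ⊓ (a'ᶜ ⊔ g') = ⊥ := by
            rw [inf_sup_left, inf_right_comm, inf_compl_eq_bot, bot_inf_eq,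
              inf_assoc, compl_inf_eq_bot, inf_bot_eq, bot_sup_eq]
          rw [this]; exact bot_le
        · exact le_trans inf_le_left inf_le_left

lemma quot_aux2 {T : Type*} [BooleanAlgebra T] {a g a' g' a'' g'' : T}
    (h1 : a ≤ (a' ⊓ a'') ⊔ (a' ⊓ g'ᶜ) ⊔ (a'' ⊓ g''ᶜ))
    (h2 : (g' ⊔ a'ᶜ) ⊓ (g'' ⊔ a''ᶜ) ≤ g ⊔ aᶜ) :
    g'' ⊔ a''ᶜ ≤ (a' ⊓ g) ⊔ aᶜ ⊔ (a' ⊓ g'ᶜ) := by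
  set L := g'' ⊔ a''ᶜ with hL
  set R := (a' ⊓ g) ⊔ aᶜ ⊔ (a' ⊓ g'ᶜ) with hR
  have haC : aᶜ ≤ R := le_sup_of_le_left le_sup_right
  have ha'g : a' ⊓ g ≤ R := le_sup_of_le_left le_sup_left
  have ha'g' : a' ⊓ g'ᶜ ≤ R := le_sup_right
  have key : L ⊓ a ≤ R := by
    have step : L ⊓ a ≤ L ⊓ ((a' ⊓ a'') ⊔ (a' ⊓ g'ᶜ) ⊔ (a'' ⊓ g''ᶜ)) :=
      inf_le_inf_left _ h1
    refine le_trans step ?_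
    rw [inf_sup_left, inf_sup_left]
    refine sup_le (sup_le ?_ ?_) ?_
    · -- L ⊓ (a' ⊓ a'') ≤ R, split on g'
      have split : L ⊓ (a' ⊓ a'') = (L ⊓ (a' ⊓ a'') ⊓ g') ⊔ (L ⊓ (a' ⊓ a'') ⊓ g'ᶜ) := by
        rw [← inf_sup_left, sup_compl_eq_top, inf_top_eq]
      rw [split]
      refine sup_le ?_ ?_
      · -- case g' : use h2
        have hm : L ⊓ (a' ⊓ a'') ⊓ g' ≤ (g' ⊔ a'ᶜ) ⊓ (g'' ⊔ a''ᶜ) :=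
          le_inf (le_trans inf_le_right le_sup_left)
            (le_trans inf_le_left (le_trans inf_le_left le_rfl))
        have hga : L ⊓ (a' ⊓ a'') ⊓ g' ≤ g ⊔ aᶜ := le_trans hm h2
        have ha' : L ⊓ (a' ⊓ a'') ⊓ g' ≤ a' :=
          le_trans inf_le_left (le_trans inf_le_right inf_le_left)
        have : L ⊓ (a' ⊓ a'') ⊓ g' ≤ a' ⊓ (g ⊔ aᶜ) := le_inf ha' hga
        refine le_trans this ?_
        rw [inf_sup_left]
        exact sup_le ha'g (le_trans inf_le_right haC)
      · -- case g'ᶜ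
        have : L ⊓ (a' ⊓ a'') ⊓ g'ᶜ ≤ a' ⊓ g'ᶜ :=
          inf_le_inf (le_trans inf_le_right inf_le_left) le_rfl
        exact le_trans this ha'g'
    · exact le_trans inf_le_right ha'g'
    · -- L ⊓ (a'' ⊓ g''ᶜ) = ⊥
      have hb : L ⊓ (a'' ⊓ g''ᶜ) ≤ ⊥ := by
        rw [hL, inf_sup_right]
        refine sup_le ?_ ?_
        · exact le_trans (inf_le_inf_left _ inf_le_right) inf_compl_eq_bot.le
        · exact le_trans (inf_le_inf_left _ inf_le_left) compl_inf_eq_bot.le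
      exact le_trans hb bot_le
  calc L = (L ⊓ a) ⊔ (L ⊓ aᶜ) := by rw [← inf_sup_left, sup_compl_eq_top, inf_top_eq]
    _ ≤ R := sup_le key (le_trans inf_le_right haC)

theorem quotient_largest {T : Type*} [BooleanAlgebra T] (C C' C'' : T × T)
    (h : ContractRefines (ContractComp C' C'') C) :
    ContractRefines C'' (ContractQuot C C') := by
  obtain ⟨h1, h2⟩ := h
  simp only [ContractRefines, ContractComp, ContractQuot] at *
  constructor
  · exact quot_aux1 h1
  · have h2' : (C'.2 ⊔ C'.1ᶜ) ⊓ (C''.2 ⊔ C''.1ᶜ) ≤ C.2 ⊔ C.1ᶜ :=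
      le_trans le_sup_left h2
    have key := quot_aux2 h1 h2'
    have hcompl : (C.1 ⊓ (C'.1ᶜ ⊔ C'.2))ᶜ = C.1ᶜ ⊔ (C'.1 ⊓ C'.2ᶜ) := by
      rw [compl_inf, compl_sup, compl_compl]
    rw [hcompl]
    refine le_trans key ?_
    -- (a'⊓g) ⊔ aᶜ ⊔ (a'⊓g'ᶜ) ≤ ((a'⊓g) ⊔ aᶜ ⊔ (a'⊓g'ᶜ)) ⊔ (aᶜ ⊔ (a'⊓g'ᶜ))
    exact le_sup_left
end

section
/- Let T be a Boolean algebra. Contract composition and refinement are compatible: if C₁ ≤ C₁' and C₂ ≤ C₂', then C₁ ∥ C₂ ≤ C₁' ∥ C₂', where ∥ is contract composition. (Monotonicity of composition with respect to refinement.) -/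
theorem composition_monotone {T : Type*} [BooleanAlgebra T]
    (C₁ C₁' C₂ C₂' : T × T)
    (h₁ : ContractRefines C₁ C₁') (h₂ : ContractRefines C₂ C₂') :
    ContractRefines (ContractComp C₁ C₂) (ContractComp C₁' C₂') := by
  obtain ⟨ha1, hg1⟩ := h₁
  obtain ⟨ha2, hg2⟩ := h₂
  unfold ContractRefines ContractComp
  simp only
  have e1 : C₁.1 ⊓ C₁.2ᶜ = (C₁.2 ⊔ C₁.1ᶜ)ᶜ := by rw [compl_sup, compl_compl, inf_comm]
  have e2 : C₂.1 ⊓ C₂.2ᶜ = (C₂.2 ⊔ C₂.1ᶜ)ᶜ := by rw [compl_sup, compl_compl, inf_comm]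
  have e1' : C₁'.1 ⊓ C₁'.2ᶜ = (C₁'.2 ⊔ C₁'.1ᶜ)ᶜ := by rw [compl_sup, compl_compl, inf_comm]
  have e2' : C₂'.1 ⊓ C₂'.2ᶜ = (C₂'.2 ⊔ C₂'.1ᶜ)ᶜ := by rw [compl_sup, compl_compl, inf_comm]
  have hGle : (C₁.2 ⊔ C₁.1ᶜ) ⊓ (C₂.2 ⊔ C₂.1ᶜ) ≤ (C₁'.2 ⊔ C₁'.1ᶜ) ⊓ (C₂'.2 ⊔ C₂'.1ᶜ) :=
    inf_le_inf hg1 hg2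
  constructor
  · refine sup_le (sup_le ?_ ?_) ?_
    · exact le_sup_of_le_left (le_sup_of_le_left (inf_le_inf ha1 ha2))
    · rw [e1', e1]; exact le_sup_of_le_left (le_sup_of_le_right (compl_le_compl hg1))
    · rw [e2', e2]; exact le_sup_of_le_right (compl_le_compl hg2)
  · refine sup_le (le_sup_of_le_left hGle) ?_
    rw [e1, e2, compl_sup, compl_sup, compl_compl, compl_compl, compl_inf]
    refine le_sup_of_le_left (le_trans ?_ hGle)
    rw [inf_assoc]; exact inf_le_right
end

section
/- Let T be a Boolean algebra and let C = (a,g), C' = (a',g') be contracts. Then C' ∥ (C / C') ≤ C. In particular, with a_q = a ⊓ (a'ᶜ ⊔ g') and g_q = (a' ⊓ g) ⊔ aᶜ ⊔ (a' ⊓ g'ᶜ), the composition of (a',g') with (a_q,g_q) refines (a,g). -/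
theorem quotient_composition_refines {T : Type*} [BooleanAlgebra T]
    (a g a' g' : T) :
    ContractRefines
      (ContractComp (a', g') (a ⊓ (a'ᶜ ⊔ g'), (a' ⊓ g) ⊔ aᶜ ⊔ (a' ⊓ g'ᶜ)))
      (a, g) := by
  set q : T := a ⊓ (a'ᶜ ⊔ g') with hqdef
  set gq : T := (a' ⊓ g) ⊔ aᶜ ⊔ (a' ⊓ g'ᶜ) with hgqdef
  have h1 : a ≤ ((a' ⊓ q) ⊔ (a' ⊓ g'ᶜ)) ⊔ (q ⊓ gqᶜ) := by
    have hsplit : a = (a ⊓ a') ⊔ (a ⊓ a'ᶜ) := sup_inf_inf_compl.symm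
    nth_rewrite 1 [hsplit]
    apply sup_le
    · have hsplit2 : a ⊓ a' = ((a ⊓ a') ⊓ g') ⊔ ((a ⊓ a') ⊓ g'ᶜ) :=
        sup_inf_inf_compl.symm
      rw [hsplit2]
      apply sup_le
      · refine le_trans ?_ (le_trans le_sup_left le_sup_left)
        exact le_inf (inf_le_left.trans inf_le_right)
          (le_inf (inf_le_left.trans inf_le_left) (inf_le_right.trans le_sup_right))
      · exact le_trans (le_inf (inf_le_left.trans inf_le_right) inf_le_right)
          (le_trans le_sup_right le_sup_left)
    · refine le_trans ?_ le_sup_right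
      have hgq : gq ≤ aᶜ ⊔ a' := by
        rw [hgqdef]
        exact sup_le (sup_le (inf_le_left.trans le_sup_right) le_sup_left)
          (inf_le_left.trans le_sup_right)
      have h2 : (aᶜ ⊔ a')ᶜ ≤ gqᶜ := compl_le_compl hgq
      have h3 : (aᶜ ⊔ a')ᶜ = a ⊓ a'ᶜ := by simp
      refine le_inf ?_ ?_
      · exact le_inf inf_le_left (inf_le_right.trans le_sup_left)
      · rw [← h3]; exact h2
  constructor
  · exact h1
  · apply sup_le
    · -- comp.2 ≤ g ⊔ aᶜ
      have hq : qᶜ ≤ gq := by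
        rw [hqdef, hgqdef, compl_inf, compl_sup, compl_compl]
        exact sup_le (le_sup_right.trans le_sup_left) le_sup_right
      refine le_trans (inf_le_inf_left _ (sup_le le_rfl hq)) ?_
      rw [hgqdef, inf_sup_left, inf_sup_left]
      apply sup_le
      apply sup_le
      · exact (inf_le_right.trans inf_le_right).trans le_sup_left
      · exact inf_le_right.trans le_sup_right
      · -- (g' ⊔ a'ᶜ) ⊓ (a' ⊓ g'ᶜ) = ⊥
        rw [inf_sup_right]
        apply sup_le
        · refine le_trans (le_inf inf_le_left (inf_le_right.trans inf_le_right)) ?_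
          simp
        · refine le_trans (le_inf inf_le_left (inf_le_right.trans inf_le_left)) ?_
          simp
    · exact (compl_le_compl h1).trans le_sup_right
end
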